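/- Let ν ≥ 0 be an integer and μ > 0 a real number. Then, as n → ∞, Σ_{h≥1} h^ν e^{−μh²/n} = (1/2) Γ((ν+1)/2) (n/μ)^{(ν+1)/2} + (−1)^ν B_{ν+1}/(ν+1) + O(n^{−1}), where Γ denotes the gamma function and B_m denotes the m-th Bernoulli number defined via Σ_{j≥0} B_j t^j/j! = t/(e^t − 1). -/

import Mathlib

/-!
Put `f(y) = y^ν e^{-μy²}` and `t = n^{-1/2}`, so that the sum is `t^{-ν} Σ_{h≥1} f(th)`. The
Euler–Maclaurin formula of order `ν + 2` for `x ↦ f(tx)` on `[0, ∞)` gives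
`Σ_{h≥1} f(th) = t⁻¹ ∫₀^∞ f + Σ_{k ≤ ν+2} (-1)^k B_{k+1}/(k+1)! t^k f⁽ᵏ⁾(0) + O(t^{ν+2})`,
since after rescaling the remainder is at most `sup |B_{ν+3}| / (ν+3)! · t^{ν+2} ∫₀^∞ |f⁽ᵛ⁺³⁾|`.
Writing `f⁽ᵏ⁾(y) = Pₖ(y) e^{-μy²}`, the value `f⁽ᵏ⁾(0) = Pₖ(0)` vanishes for `k < ν` (`Pₖ` has no
monomials of degree below `ν - k`) and for `k = ν + 1` (the degrees of `Pₖ` all have the parity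
of `ν - k`), while `f⁽ᵛ⁾(0) = ν!`. The integral is a Gamma value, and multiplying by `t^{-ν}`
leaves `(-1)^ν B_{ν+1}/(ν+1)` plus an error `O(t²) = O(1/n)`.
-/

open Filter Topology MeasureTheory Set Real Asymptotics
open scoped Nat

theorem integral_bernoulliFun_sub_mul_deriv (k : ℕ) (a : ℝ) {v w : ℝ → ℝ}
    (hv : ∀ x, HasDerivAt v (w x) x) (hw : Continuous w) :
    ∫ x in a..a + 1, bernoulliFun (k + 1) (x - a) * w x =
      bernoulliFun (k + 1) 1 * v (a + 1) - bernoulliFun (k + 1) 0 * v a -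
        (k + 1) * ∫ x in a..a + 1, bernoulliFun k (x - a) * v x := by
  have hB (x : ℝ) : HasDerivAt (fun x => bernoulliFun (k + 1) (x - a))
      ((k + 1) * bernoulliFun k (x - a)) x := by
    simpa using (hasDerivAt_bernoulliFun (k + 1) (x - a)).comp_sub_const x a
  have hBc : Continuous fun x => (k + 1 : ℝ) * bernoulliFun k (x - a) := by fun_prop
  rw [intervalIntegral.integral_mul_deriv_eq_deriv_mul (fun x _ => hB x) (fun x _ => hv x)
    (hBc.intervalIntegrable _ _) (hw.intervalIntegrable _ _),
    ← intervalIntegral.integral_const_mul]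
  simp [mul_assoc]

/-- `∫₀ᴺ B̃ₖ(x) g(x) dx` for the `1`-periodic extension `B̃ₖ` of `Bₖ` on `[0, 1)`, computed
interval by interval. -/
noncomputable def periodicBernoulliIntegral (k : ℕ) (g : ℝ → ℝ) (N : ℕ) : ℝ :=
  ∑ j ∈ Finset.range N, ∫ x in (j : ℝ)..j + 1, bernoulliFun k (x - j) * g x

theorem periodicBernoulliIntegral_zero {g : ℝ → ℝ} (hg : Continuous g) (N : ℕ) :
    periodicBernoulliIntegral 0 g N = ∫ x in (0 : ℝ)..N, g x := by
  simpa [periodicBernoulliIntegral] using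
    intervalIntegral.sum_integral_adjacent_intervals (a := fun j : ℕ => (j : ℝ)) (n := N)
      fun j _ => hg.intervalIntegrable _ _

theorem periodicBernoulliIntegral_succ (k N : ℕ) {v w : ℝ → ℝ}
    (hv : ∀ x, HasDerivAt v (w x) x) (hw : Continuous w) :
    periodicBernoulliIntegral (k + 1) w N =
      ∑ j ∈ Finset.range N, (bernoulliFun (k + 1) 1 * v (j + 1) - bernoulliFun (k + 1) 0 * v j)
        - (k + 1) * periodicBernoulliIntegral k v N := by
  simp only [periodicBernoulliIntegral, Finset.mul_sum, ← Finset.sum_sub_distrib,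
    integral_bernoulliFun_sub_mul_deriv k _ hv hw]

theorem abs_periodicBernoulliIntegral_le {k : ℕ} {g : ℝ → ℝ} {C : ℝ} (hg : Continuous g)
    (hC : ∀ x ∈ Icc (0 : ℝ) 1, |bernoulliFun k x| ≤ C) (N : ℕ) :
    |periodicBernoulliIntegral k g N| ≤ C * ∫ x in (0 : ℝ)..N, |g x| := by
  have hpiece (j : ℕ) : |∫ x in (j : ℝ)..j + 1, bernoulliFun k (x - j) * g x|
      ≤ ∫ x in (j : ℝ)..j + 1, C * |g x| := by
    refine (intervalIntegral.abs_integral_le_integral_abs (by linarith)).trans ?_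
    refine intervalIntegral.integral_mono_on (by linarith)
      (Continuous.intervalIntegrable (by fun_prop) _ _)
      (Continuous.intervalIntegrable (by fun_prop) _ _)
      fun x hx => ?_
    rw [abs_mul]
    exact mul_le_mul_of_nonneg_right (hC _ ⟨by linarith [hx.1], by linarith [hx.2]⟩)
      (abs_nonneg _)
  calc |periodicBernoulliIntegral k g N|
      ≤ ∑ j ∈ Finset.range N, ∫ x in (j : ℝ)..j + 1, C * |g x| :=
        (Finset.abs_sum_le_sum_abs _ _).trans (Finset.sum_le_sum fun j _ => hpiece j)
    _ = C * ∫ x in (0 : ℝ)..N, |g x| := by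
        rw [← intervalIntegral.integral_const_mul]
        simpa using intervalIntegral.sum_integral_adjacent_intervals
          (a := fun j : ℕ => (j : ℝ)) (n := N) (f := fun x => C * |g x|)
          fun j _ => (by fun_prop : Continuous fun x => C * |g x|).intervalIntegrable _ _

theorem sum_range_eq_integral_add_sum_bernoulli (m N : ℕ) {D : ℕ → ℝ → ℝ}
    (hD : ∀ k ≤ m, ∀ x, HasDerivAt (D k) (D (k + 1) x) x) (hc : Continuous (D (m + 1))) :
    ∑ j ∈ Finset.range N, D 0 (j + 1) = (∫ x in (0 : ℝ)..N, D 0 x)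
      + ∑ k ∈ Finset.range (m + 1), (-1) ^ k * bernoulli (k + 1) / (k + 1)! * (D k 0 - D k N)
      + (-1) ^ m / (m + 1)! * periodicBernoulliIntegral (m + 1) (D (m + 1)) N := by
  have hcont (k : ℕ) (hk : k ≤ m) : Continuous (D k) :=
    continuous_iff_continuousAt.2 fun x => (hD k hk x).continuousAt
  induction m with
  | zero =>
    have hshift : ∑ j ∈ Finset.range N, D 0 j
        = ∑ j ∈ Finset.range N, D 0 (j + 1) + D 0 0 - D 0 N := by
      have h := (Finset.sum_range_succ' (fun j : ℕ => D 0 j) N).symm.trans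
        (Finset.sum_range_succ _ N)
      push_cast at h
      linarith
    rw [periodicBernoulliIntegral_succ 0 N (hD 0 le_rfl) hc,
      periodicBernoulliIntegral_zero (hcont 0 le_rfl), Finset.sum_sub_distrib, ← Finset.mul_sum,
      ← Finset.mul_sum, hshift]
    simp only [zero_add, Finset.sum_range_one, bernoulliFun_one, bernoulli_one]
    push_cast
    ring
  | succ m ih =>
    rw [ih (fun k hk => hD k (by omega)) (hcont _ le_rfl) (fun k hk => hcont k (by omega)),
      periodicBernoulliIntegral_succ (m + 1) N (hD (m + 1) le_rfl) hc,
      bernoulliFun_endpoints_eq_of_ne_one (by omega), bernoulliFun_eval_zero]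
    have htelescope : ∑ j ∈ Finset.range N, (D (m + 1) (j + 1) - D (m + 1) j)
        = D (m + 1) N - D (m + 1) 0 := by
      simpa using Finset.sum_range_sub (fun j : ℕ => D (m + 1) j) N
    simp only [← mul_sub, ← Finset.mul_sum]
    rw [htelescope, Finset.sum_range_succ _ (m + 1)]
    simp only [Nat.factorial_succ]
    push_cast
    field_simp
    ring

theorem intervalIntegral_abs_le_integral_Ioi_abs {g : ℝ → ℝ} (hg : IntegrableOn g (Ioi 0))
    {b : ℝ} (hb : 0 ≤ b) : ∫ x in (0 : ℝ)..b, |g x| ≤ ∫ x in Ioi 0, |g x| := by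
  rw [intervalIntegral.integral_of_le hb]
  exact setIntegral_mono_set hg.abs (Eventually.of_forall fun x => abs_nonneg _)
    Ioc_subset_Ioi_self.eventuallyLE

theorem abs_tsum_sub_integral_sub_sum_bernoulli_le {m : ℕ} {D : ℕ → ℝ → ℝ} {C : ℝ}
    (hD : ∀ k ≤ m, ∀ x, HasDerivAt (D k) (D (k + 1) x) x) (hc : Continuous (D (m + 1)))
    (hint₀ : IntegrableOn (D 0) (Ioi 0)) (hint : IntegrableOn (D (m + 1)) (Ioi 0))
    (htend : ∀ k ≤ m, Tendsto (D k) atTop (𝓝 0)) (hsum : Summable fun j : ℕ => D 0 (j + 1))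
    (hC : ∀ x ∈ Icc (0 : ℝ) 1, |bernoulliFun (m + 1) x| ≤ C) :
    |∑' j : ℕ, D 0 (j + 1) - (∫ x in Ioi 0, D 0 x)
        - ∑ k ∈ Finset.range (m + 1), (-1) ^ k * bernoulli (k + 1) / (k + 1)! * D k 0|
      ≤ C / (m + 1)! * ∫ x in Ioi 0, |D (m + 1) x| := by
  set E : ℕ → ℝ := fun N => ∑ j ∈ Finset.range N, D 0 (j + 1) - (∫ x in (0 : ℝ)..N, D 0 x)
    - ∑ k ∈ Finset.range (m + 1), (-1) ^ k * bernoulli (k + 1) / (k + 1)! * (D k 0 - D k N)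
  have hlim : Tendsto E atTop (𝓝 (∑' j : ℕ, D 0 (j + 1) - (∫ x in Ioi 0, D 0 x)
      - ∑ k ∈ Finset.range (m + 1), (-1) ^ k * bernoulli (k + 1) / (k + 1)! * D k 0)) := by
    refine (hsum.hasSum.tendsto_sum_nat.sub
      (intervalIntegral_tendsto_integral_Ioi 0 hint₀ tendsto_natCast_atTop_atTop)).sub ?_
    refine tendsto_finsetSum _ fun k hk => ?_
    simpa using (((htend k (Finset.mem_range_succ_iff.1 hk)).comp
      tendsto_natCast_atTop_atTop).const_sub (D k 0)).const_mul
        ((-1) ^ k * bernoulli (k + 1) / (k + 1)! : ℝ)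
  have hC₀ : 0 ≤ C := (abs_nonneg _).trans (hC 0 ⟨le_rfl, zero_le_one⟩)
  refine le_of_tendsto' hlim.abs fun N => ?_
  have hE : E N = (-1) ^ m / (m + 1)! * periodicBernoulliIntegral (m + 1) (D (m + 1)) N := by
    simp only [E, sum_range_eq_integral_add_sum_bernoulli m N hD hc]
    ring
  rw [hE, abs_mul, abs_div, abs_pow, abs_neg, abs_one, one_pow, Nat.abs_cast,
    one_div_mul_eq_div, div_mul_eq_mul_div]
  gcongr
  exact (abs_periodicBernoulliIntegral_le hc hC N).trans
    (mul_le_mul_of_nonneg_left (intervalIntegral_abs_le_integral_Ioi_abs hint N.cast_nonneg) hC₀)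

theorem abs_tsum_comp_mul_sub_le {m : ℕ} {q : ℕ → ℝ → ℝ} {C t : ℝ} (ht : 0 < t)
    (hq : ∀ k ≤ m, ∀ y, HasDerivAt (q k) (q (k + 1) y) y) (hc : Continuous (q (m + 1)))
    (hint₀ : IntegrableOn (q 0) (Ioi 0)) (hint : IntegrableOn (q (m + 1)) (Ioi 0))
    (htend : ∀ k ≤ m, Tendsto (q k) atTop (𝓝 0))
    (hsum : Summable fun j : ℕ => q 0 (t * (j + 1)))
    (hC : ∀ x ∈ Icc (0 : ℝ) 1, |bernoulliFun (m + 1) x| ≤ C) :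
    |∑' j : ℕ, q 0 (t * (j + 1)) - t⁻¹ * (∫ y in Ioi 0, q 0 y)
        - ∑ k ∈ Finset.range (m + 1), (-1) ^ k * bernoulli (k + 1) / (k + 1)! * t ^ k * q k 0|
      ≤ C / (m + 1)! * t ^ m * ∫ y in Ioi 0, |q (m + 1) y| := by
  have hD (k : ℕ) (hk : k ≤ m) (x : ℝ) : HasDerivAt (fun x => t ^ k * q k (t * x))
      (t ^ (k + 1) * q (k + 1) (t * x)) x :=
    (((hq k hk (t * x)).comp x ((hasDerivAt_id x).const_mul t)).const_mul
      (t ^ k)).congr_deriv (by ring)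
  have hcomp (g : ℝ → ℝ) : ∫ x in Ioi 0, g (t * x) = t⁻¹ * ∫ y in Ioi 0, g y := by
    simpa using integral_comp_mul_left_Ioi g 0 ht
  have hbound := abs_tsum_sub_integral_sub_sum_bernoulli_le (D := fun k x => t ^ k * q k (t * x))
    (C := C) hD (by fun_prop)
    (by simpa using (integrableOn_Ioi_comp_mul_left_iff (q 0) 0 ht).2 (by simpa using hint₀))
    (((integrableOn_Ioi_comp_mul_left_iff (q (m + 1)) 0 ht).2 (by simpa using hint)).const_mul
      (t ^ (m + 1)))
    (fun k hk => by
      simpa using ((htend k hk).comp (tendsto_id.const_mul_atTop ht)).const_mul (t ^ k))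
    (by simpa using hsum) hC
  simp only [pow_zero, one_mul, mul_zero, abs_mul, abs_of_pos (pow_pos ht _)] at hbound
  rw [hcomp, integral_const_mul, hcomp (fun y => |q (m + 1) y|)] at hbound
  convert hbound using 1
  · simp only [mul_assoc]
  · field_simp
    ring

section GaussianDecay

open Polynomial

theorem isLittleO_eval_mul_exp_neg_mul_sq (p : ℝ[X]) {b : ℝ} (hb : 0 < b) :
    (fun x => p.eval x * exp (-b * x ^ 2)) =o[atTop] fun x => exp (-(1 / 2) * x) := by
  have hp : (fun x => p.eval x) =O[atTop] fun x => x ^ p.natDegree := by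
    simpa using isBigO_atTop_of_degree_le p (X ^ p.natDegree) (by simp [degree_le_natDegree])
  exact (hp.mul (isBigO_refl _ _)).trans_isLittleO
    (by simpa using rpow_mul_exp_neg_mul_sq_isLittleO_exp_neg hb p.natDegree)

theorem integrableOn_eval_mul_exp_neg_mul_sq (p : ℝ[X]) {b : ℝ} (hb : 0 < b) :
    IntegrableOn (fun x => p.eval x * exp (-b * x ^ 2)) (Ioi 0) :=
  integrable_of_isBigO_exp_neg one_half_pos (by fun_prop)
    (isLittleO_eval_mul_exp_neg_mul_sq p hb).isBigO

theorem tendsto_eval_mul_exp_neg_mul_sq (p : ℝ[X]) {b : ℝ} (hb : 0 < b) :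
    Tendsto (fun x => p.eval x * exp (-b * x ^ 2)) atTop (𝓝 0) :=
  (isLittleO_eval_mul_exp_neg_mul_sq p hb).trans_tendsto
    (tendsto_exp_atBot.comp (tendsto_id.const_mul_atTop_of_neg (by norm_num)))

theorem summable_eval_mul_exp_neg_mul_sq (p : ℝ[X]) {b t : ℝ} (hb : 0 < b) (ht : 0 < t) :
    Summable fun j : ℕ => p.eval (t * (j + 1)) * exp (-b * (t * (j + 1)) ^ 2) := by
  have hlin : Tendsto (fun j : ℕ => t * ((j : ℝ) + 1)) atTop atTop :=
    (tendsto_natCast_atTop_atTop.atTop_add tendsto_const_nhds).const_mul_atTop ht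
  refine summable_of_isBigO_nat ?_
    ((isLittleO_eval_mul_exp_neg_mul_sq p hb).isBigO.comp_tendsto hlin)
  have hgeom := summable_exp_nat_mul_of_ge (c := -(t / 2)) (by linarith)
    (f := fun j : ℕ => (j : ℝ) + 1) (fun j => by linarith)
  refine hgeom.congr fun j => ?_
  simp only [Function.comp_apply]
  ring_nf

end GaussianDecay

section GaussDeriv

open Polynomial

variable (ν : ℕ) (μ : ℝ)

noncomputable def gaussDerivPoly : ℕ → ℝ[X]
  | 0 => X ^ ν
  | k + 1 => derivative (gaussDerivPoly k) - C (2 * μ) * X * gaussDerivPoly k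

noncomputable def gaussDeriv (k : ℕ) (y : ℝ) : ℝ :=
  (gaussDerivPoly ν μ k).eval y * exp (-μ * y ^ 2)

theorem hasDerivAt_gaussDeriv (k : ℕ) (y : ℝ) :
    HasDerivAt (gaussDeriv ν μ k) (gaussDeriv ν μ (k + 1) y) y := by
  have hexp : HasDerivAt (fun y => exp (-μ * y ^ 2)) (exp (-μ * y ^ 2) * (-μ * (2 * y))) y := by
    simpa using ((hasDerivAt_pow 2 y).const_mul (-μ)).exp
  refine ((gaussDerivPoly ν μ k).hasDerivAt y |>.mul hexp).congr_deriv ?_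
  simp only [gaussDeriv, gaussDerivPoly, eval_sub, eval_mul, eval_C, eval_X]
  ring

theorem coeff_gaussDerivPoly_succ_zero (k : ℕ) :
    (gaussDerivPoly ν μ (k + 1)).coeff 0 = (gaussDerivPoly ν μ k).coeff 1 := by
  simp [gaussDerivPoly, coeff_derivative, mul_assoc]

theorem coeff_gaussDerivPoly_succ_succ (k i : ℕ) :
    (gaussDerivPoly ν μ (k + 1)).coeff (i + 1)
      = (gaussDerivPoly ν μ k).coeff (i + 2) * (i + 2)
        - 2 * μ * (gaussDerivPoly ν μ k).coeff i := by
  simp only [gaussDerivPoly, coeff_sub, coeff_derivative, mul_assoc, coeff_C_mul, coeff_X_mul]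
  push_cast
  ring

theorem coeff_gaussDerivPoly_eq_zero {k i : ℕ} (h : i + k < ν ∨ (i + k) % 2 ≠ ν % 2) :
    (gaussDerivPoly ν μ k).coeff i = 0 := by
  induction k generalizing i with
  | zero =>
    simp only [gaussDerivPoly, coeff_X_pow]
    exact if_neg (by omega)
  | succ k ih =>
    cases i with
    | zero => rw [coeff_gaussDerivPoly_succ_zero, ih (by omega)]
    | succ i =>
      rw [coeff_gaussDerivPoly_succ_succ, ih (i := i + 2) (by omega), ih (by omega)]
      ring

theorem coeff_gaussDerivPoly_sub {k : ℕ} (hk : k ≤ ν) :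
    (gaussDerivPoly ν μ k).coeff (ν - k) = ν.descFactorial k := by
  induction k with
  | zero => simp [gaussDerivPoly]
  | succ k ih =>
    have hdiag := ih (by omega)
    obtain ⟨i, hi⟩ : ∃ i, ν - (k + 1) = i := ⟨_, rfl⟩
    rw [show ν - k = i + 1 by omega] at hdiag
    rw [hi, Nat.descFactorial_succ, show ν - k = i + 1 by omega]
    cases i with
    | zero => rw [coeff_gaussDerivPoly_succ_zero, hdiag]; push_cast; ring
    | succ i =>
      rw [coeff_gaussDerivPoly_succ_succ, hdiag,
        coeff_gaussDerivPoly_eq_zero ν μ (k := k) (i := i) (by omega)]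
      push_cast
      ring

theorem gaussDeriv_apply_zero (k : ℕ) :
    gaussDeriv ν μ k 0 = (gaussDerivPoly ν μ k).coeff 0 := by
  simp [gaussDeriv, coeff_zero_eq_eval_zero]

end GaussDeriv

theorem sum_bernoulli_mul_gaussDeriv_zero (ν : ℕ) (μ t : ℝ) :
    ∑ k ∈ Finset.range (ν + 3),
        (-1) ^ k * bernoulli (k + 1) / (k + 1)! * t ^ k * gaussDeriv ν μ k 0
      = t ^ ν * ((-1) ^ ν * bernoulli (ν + 1) / (ν + 1))
        + t ^ (ν + 2) * ((-1) ^ ν * bernoulli (ν + 3) / (ν + 3)!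
          * (gaussDerivPoly ν μ (ν + 2)).coeff 0) := by
  have hlow : ∀ k ∈ Finset.range ν,
      (-1) ^ k * bernoulli (k + 1) / (k + 1)! * t ^ k * gaussDeriv ν μ k 0 = (0 : ℝ) := by
    intro k hk
    rw [gaussDeriv_apply_zero, coeff_gaussDerivPoly_eq_zero ν μ
      (by simp only [Finset.mem_range] at hk; omega), mul_zero]
  have hν : (gaussDerivPoly ν μ ν).coeff 0 = ν ! := by
    simpa [Nat.descFactorial_self] using coeff_gaussDerivPoly_sub ν μ le_rfl
  have hν₁ : (gaussDerivPoly ν μ (ν + 1)).coeff 0 = 0 :=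
    coeff_gaussDerivPoly_eq_zero ν μ (by omega)
  rw [Finset.sum_range_succ, Finset.sum_range_succ, Finset.sum_range_succ,
    Finset.sum_eq_zero hlow]
  simp only [gaussDeriv_apply_zero, hν, hν₁, Nat.factorial_succ]
  push_cast
  field_simp
  ring

theorem exists_abs_tsum_pow_mul_exp_sub_le (ν : ℕ) {μ : ℝ} (hμ : 0 < μ) :
    ∃ K, ∀ t > 0, |∑' j : ℕ, (t * (j + 1)) ^ ν * exp (-μ * (t * (j + 1)) ^ 2)
        - t⁻¹ * (μ ^ (-((ν : ℝ) + 1) / 2) * (1 / 2) * Gamma (((ν : ℝ) + 1) / 2))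
        - t ^ ν * ((-1) ^ ν * bernoulli (ν + 1) / (ν + 1))| ≤ K * t ^ (ν + 2) := by
  obtain ⟨C, hC⟩ := (isCompact_Icc (a := (0 : ℝ)) (b := 1)).exists_bound_of_continuousOn
    (continuous_bernoulliFun (ν + 3)).continuousOn
  set c : ℝ := (-1) ^ ν * bernoulli (ν + 3) / (ν + 3)! * (gaussDerivPoly ν μ (ν + 2)).coeff 0
  refine ⟨|c| + C / (ν + 3)! * ∫ y in Ioi 0, |gaussDeriv ν μ (ν + 3) y|, fun t ht => ?_⟩
  have hq₀ (y : ℝ) : gaussDeriv ν μ 0 y = y ^ ν * exp (-μ * y ^ 2) := by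
    simp [gaussDeriv, gaussDerivPoly]
  have hI : ∫ y in Ioi 0, gaussDeriv ν μ 0 y
      = μ ^ (-((ν : ℝ) + 1) / 2) * (1 / 2) * Gamma (((ν : ℝ) + 1) / 2) := by
    simpa [hq₀, rpow_natCast, rpow_two] using
      integral_rpow_mul_exp_neg_mul_rpow (p := 2) (q := ν) two_pos
        (by linarith [ν.cast_nonneg (α := ℝ)]) hμ
  have hEM := abs_tsum_comp_mul_sub_le (m := ν + 2) (C := C) ht
    (fun k _ y => hasDerivAt_gaussDeriv ν μ k y)
    (continuous_iff_continuousAt.2 fun y => (hasDerivAt_gaussDeriv ν μ _ y).continuousAt)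
    (integrableOn_eval_mul_exp_neg_mul_sq _ hμ) (integrableOn_eval_mul_exp_neg_mul_sq _ hμ)
    (fun k _ => tendsto_eval_mul_exp_neg_mul_sq _ hμ) (summable_eval_mul_exp_neg_mul_sq _ hμ ht)
    (fun x hx => by simpa using hC x hx)
  rw [sum_bernoulli_mul_gaussDeriv_zero, hI] at hEM
  simp only [hq₀] at hEM
  calc _ = |(∑' j : ℕ, (t * (j + 1)) ^ ν * exp (-μ * (t * (j + 1)) ^ 2)
          - t⁻¹ * (μ ^ (-((ν : ℝ) + 1) / 2) * (1 / 2) * Gamma (((ν : ℝ) + 1) / 2))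
          - (t ^ ν * ((-1) ^ ν * bernoulli (ν + 1) / (ν + 1)) + t ^ (ν + 2) * c))
          + t ^ (ν + 2) * c| := by congr 1; ring
    _ ≤ C / (ν + 2 + 1)! * t ^ (ν + 2) * (∫ y in Ioi 0, |gaussDeriv ν μ (ν + 2 + 1) y|)
          + |c| * t ^ (ν + 2) := by
        refine (abs_add_le _ _).trans (add_le_add hEM ?_)
        rw [abs_mul, abs_of_pos (pow_pos ht _), mul_comm]
    _ = _ := by ring

theorem exists_abs_tsum_pnat_pow_mul_exp_sub_le (ν : ℕ) {μ : ℝ} (hμ : 0 < μ) :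
    ∃ K, ∀ n : ℕ, 0 < n →
      |∑' h : ℕ+, ((h : ℕ) : ℝ) ^ ν * exp (-μ * ((h : ℕ) : ℝ) ^ 2 / n)
        - ((1 / 2) * Gamma (((ν : ℝ) + 1) / 2) * ((n : ℝ) / μ) ^ (((ν : ℝ) + 1) / 2)
          + (-1) ^ ν * bernoulli (ν + 1) / ((ν : ℝ) + 1))| ≤ K * (n : ℝ)⁻¹ := by
  obtain ⟨K, hK⟩ := exists_abs_tsum_pow_mul_exp_sub_le ν hμ
  refine ⟨K, fun n hn => ?_⟩
  have hn' : (0 : ℝ) < n := Nat.cast_pos.2 hn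
  obtain ⟨s, hs, hs2⟩ : ∃ s : ℝ, 0 < s ∧ s ^ 2 = n := ⟨√n, sqrt_pos.2 hn', sq_sqrt hn'.le⟩
  have htsum : ∑' h : ℕ+, ((h : ℕ) : ℝ) ^ ν * exp (-μ * ((h : ℕ) : ℝ) ^ 2 / n)
      = s ^ ν * ∑' j : ℕ, (s⁻¹ * (j + 1)) ^ ν * exp (-μ * (s⁻¹ * (j + 1)) ^ 2) := by
    rw [tsum_pnat_eq_tsum_succ (f := fun h : ℕ => (h : ℝ) ^ ν * exp (-μ * (h : ℝ) ^ 2 / n)),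
      ← tsum_mul_left]
    congr 1 with j
    rw [← hs2, mul_pow, inv_pow, mul_pow, inv_pow]
    push_cast
    field_simp
  have hmain :
      ((n : ℝ) / μ) ^ (((ν : ℝ) + 1) / 2) = s ^ (ν + 1) * μ ^ (-((ν : ℝ) + 1) / 2) := by
    rw [div_rpow hn'.le hμ.le, neg_div, rpow_neg hμ.le, div_eq_mul_inv, ← hs2,
      ← rpow_natCast_mul hs.le, ← rpow_natCast]
    push_cast
    ring_nf
  rw [htsum, hmain]
  set T := ∑' j : ℕ, (s⁻¹ * (j + 1)) ^ ν * exp (-μ * (s⁻¹ * (j + 1)) ^ 2)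
  have hsν : 0 < s ^ ν := pow_pos hs ν
  calc _ = s ^ ν * |T
        - s⁻¹⁻¹ * (μ ^ (-((ν : ℝ) + 1) / 2) * (1 / 2) * Gamma (((ν : ℝ) + 1) / 2))
        - s⁻¹ ^ ν * ((-1) ^ ν * bernoulli (ν + 1) / (ν + 1))| := by
          rw [← abs_of_pos hsν, ← abs_mul, abs_of_pos hsν, inv_inv, inv_pow]
          congr 1
          field_simp
          ring
    _ ≤ s ^ ν * (K * s⁻¹ ^ (ν + 2)) := by gcongr; exact hK _ (inv_pos.2 hs)
    _ = K * (n : ℝ)⁻¹ := by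
          rw [← hs2, inv_pow, pow_add]
          field_simp

theorem stmt7 (ν : ℕ) (μ : ℝ) (hμ : 0 < μ) :
    (fun n : ℕ =>
        (∑' h : ℕ+, ((h : ℕ) : ℝ)^ν * Real.exp (-μ * ((h : ℕ) : ℝ)^2 / (n : ℝ)))
          - ((1/2) * Real.Gamma (((ν : ℝ)+1)/2) * ((n : ℝ)/μ)^((((ν : ℝ))+1)/2)
              + (-1:ℝ)^ν * ((bernoulli (ν+1) : ℚ) : ℝ) / ((ν : ℝ)+1)))
      =O[atTop] (fun n : ℕ => (n : ℝ)⁻¹) := by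
  obtain ⟨K, hK⟩ := exists_abs_tsum_pnat_pow_mul_exp_sub_le ν hμ
  refine isBigO_iff.2 ⟨K, ?_⟩
  filter_upwards [eventually_gt_atTop 0] with n hn
  rw [norm_eq_abs, norm_of_nonneg (by positivity)]
  exact hK n hn
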